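/- Let g be a finite-dimensional Lie algebra over a field of characteristic 0 whose Killing form κ is nondegenerate, and let (e, h, f) be an sl₂-triple in g. Set V := [f, g] (the range of ad(f)) and define ω(ξ, η) := κ(e, [ξ, η]) for ξ, η ∈ g. Then g = [f, g] ⊕ z_g(e), and the restriction of the alternating form ω to V is nondegenerate; that is, (V, ω) is a symplectic vector space. -/

import Mathlib

/-!
Let `E`, `H`, `F` be the actions of an `sl₂`-triple `(e, h, f)` on a finite-dimensional
representation. Then `F` is nilpotent: on the stable range of `F` it is invertible and
conjugates `H` to `H + 2`, which is impossible by taking traces. If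
`x ∈ ker E ∩ range F^(m+1)`, then `(H + m + 2) x` lies in `ker E ∩ range F^(m+2)`; descending
from a power with `F^n = 0`, and using that `ker E` contains no `H`-eigenvector of negative
integer eigenvalue (no primitive vector of negative weight), gives `ker E ∩ range F = 0`.
Applied also to the triple `(-h, f, e)`, rank–nullity upgrades this to `range F ⊕ ker E`.

For the adjoint representation, invariance of `κ` gives `κ(e, [x, y]) = κ([e, x], y)`, which
vanishes on `y ∈ z_g(e)`; so if it vanishes on `[f, g]` as well, nondegeneracy gives
`[e, x] = 0`, and `x ∈ [f, g] ∩ z_g(e) = 0`.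
-/

open LieModule Module

section Commutator

variable {R A : Type*} [CommRing R] [Ring A] [Algebra R A]

theorem lie_pow_of_lie_eq_smul {a b : A} {c : R} (hab : ⁅a, b⁆ = c • b) (n : ℕ) :
    ⁅a, b ^ n⁆ = (n * c) • b ^ n := by
  induction n with
  | zero => simp [Ring.lie_def]
  | succ n ih =>
    calc ⁅a, b ^ (n + 1)⁆ = ⁅a, b ^ n⁆ * b + b ^ n * ⁅a, b⁆ := by
          simp only [Ring.lie_def, pow_succ]; noncomm_ring
      _ = ((n + 1 : ℕ) * c) • b ^ (n + 1) := by
          rw [ih, hab, smul_mul_assoc, mul_smul_comm, ← pow_succ, ← add_smul]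
          push_cast; module

theorem lie_pow_succ_of_sl2 {e h f : A} (hef : ⁅e, f⁆ = h) (hhf : ⁅h, f⁆ = (-2 : R) • f)
    (n : ℕ) :
    ⁅e, f ^ (n + 1)⁆ = (n + 1 : R) • (f ^ n * h) - ((n + 1) * n : R) • f ^ n := by
  induction n with
  | zero => simp [hef]
  | succ n ih =>
    have hhf' : h * f = f * h + (-2 : R) • f := by
      rw [← hhf, Ring.lie_def]; abel
    calc ⁅e, f ^ (n + 1 + 1)⁆ = ⁅e, f ^ (n + 1)⁆ * f + f ^ (n + 1) * ⁅e, f⁆ := by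
          simp only [Ring.lie_def, pow_succ _ (n + 1)]; noncomm_ring
      _ = _ := by
          rw [ih, hef, sub_mul, smul_mul_assoc, smul_mul_assoc, mul_assoc, hhf']
          simp only [mul_add, mul_smul_comm, ← mul_assoc, ← pow_succ]
          push_cast
          module

end Commutator

namespace Module.End

variable {k V : Type*} [Field k] [AddCommGroup V] [Module k V] [FiniteDimensional k V]

theorem mul_finrank_eq_zero_of_lie_eq_smul_of_isUnit {a b : End k V} {c : k}
    (hb : IsUnit b) (hab : ⁅a, b⁆ = c • b) : c * finrank k V = 0 := by
  obtain ⟨u, rfl⟩ := hb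
  have hconj : c • 1 = a - ↑u * (a * ↑u⁻¹) := by
    rw [← Units.mul_inv u, ← smul_mul_assoc, ← hab, Ring.lie_def, sub_mul, mul_assoc,
      Units.mul_inv, mul_one, mul_assoc]
  have := congrArg (LinearMap.trace k V) hconj
  rwa [map_smul, LinearMap.trace_one, map_sub, LinearMap.trace_mul_comm, mul_assoc,
    Units.inv_mul, mul_one, sub_self, smul_eq_mul] at this

theorem isNilpotent_of_lie_eq_smul [CharZero k] {a b : End k V} {c : k} (hc : c ≠ 0)
    (hab : ⁅a, b⁆ = c • b) : IsNilpotent b := by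
  obtain ⟨n, hn⟩ := IsArtinian.monotone_stabilizes b.iterateRange
  set W := LinearMap.range (b ^ n)
  have hW : LinearMap.range (b ^ (n + 1)) = W := (hn (n + 1) n.le_succ).symm
  have hbW : ∀ x ∈ W, b x ∈ W := by
    rintro _ ⟨y, rfl⟩
    rw [← hW]
    exact ⟨y, by rw [pow_succ', mul_apply]⟩
  have haW : ∀ x ∈ W, a x ∈ W := by
    rintro _ ⟨y, rfl⟩
    have hpow : a * b ^ n = b ^ n * a + (n * c) • b ^ n := by
      rw [← lie_pow_of_lie_eq_smul hab n, Ring.lie_def]; abel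
    rw [← mul_apply, hpow]
    exact W.add_mem ⟨a y, rfl⟩ (W.smul_mem _ ⟨y, rfl⟩)
  have hunit : IsUnit (b.restrict hbW) := by
    rw [LinearMap.isUnit_iff_range_eq_top, eq_top_iff]
    rintro ⟨w, hw⟩ -
    rw [← hW] at hw
    obtain ⟨z, rfl⟩ := hw
    exact ⟨⟨(b ^ n) z, z, rfl⟩, Subtype.ext (by simp [pow_succ'])⟩
  have hlie : ⁅a.restrict haW, b.restrict hbW⁆ = c • b.restrict hbW := by
    ext ⟨x, hx⟩
    simpa [Ring.lie_def] using congrArg (· x) hab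
  have hW0 : finrank k W = 0 := by
    simpa [hc] using mul_finrank_eq_zero_of_lie_eq_smul_of_isUnit hunit hlie
  exact ⟨n, LinearMap.range_eq_bot.mp (Submodule.finrank_eq_zero.mp hW0)⟩

end Module.End

theorem LinearMap.isCompl_range_ker_of_disjoint {k V W : Type*} [Field k] [AddCommGroup V]
    [Module k V] [FiniteDimensional k V] [AddCommGroup W] [Module k W] [FiniteDimensional k W]
    {a : V →ₗ[k] W} {b : W →ₗ[k] V} (hab : Disjoint (range a) (ker b))
    (hba : Disjoint (range b) (ker a)) : IsCompl (range a) (ker b) := by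
  refine (Submodule.isCompl_iff_disjoint _ _ ?_).mpr hab
  have := finrank_range_add_finrank_ker a
  have := finrank_range_add_finrank_ker b
  have := Submodule.finrank_add_finrank_le_of_disjoint hba
  omega

namespace IsSl2Triple

variable {k L M : Type*} [Field k] [LieRing L] [LieAlgebra k L]
  [AddCommGroup M] [Module k M] [LieRingModule L M] [LieModule k L M] {h e f : L}

theorem lie_toEnd_h_toEnd_f (t : IsSl2Triple h e f) :
    ⁅toEnd k L M h, toEnd k L M f⁆ = (-2 : k) • toEnd k L M f := by
  ext x
  simp [Ring.lie_def, ← lie_lie, t.lie_lie_smul_f k]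

theorem lie_toEnd_e_toEnd_f (t : IsSl2Triple h e f) :
    ⁅toEnd k L M e, toEnd k L M f⁆ = toEnd k L M h := by
  ext x
  simp [Ring.lie_def, ← lie_lie, t.lie_e_f]

theorem lie_e_lie_h_add_smul (t : IsSl2Triple h e f) {x : M} (hx : ⁅e, x⁆ = 0) (c : k) :
    ⁅e, ⁅h, x⁆ + c • x⁆ = 0 := by
  rw [lie_add, lie_smul, leibniz_lie, ← lie_skew e h, t.lie_h_e_smul k]
  simp [hx]

variable [CharZero k]

theorem eq_zero_of_lie_e_eq_zero_of_lie_h_add_smul_eq_zero [FiniteDimensional k M]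
    (t : IsSl2Triple h e f) {x : M} (n : ℕ) (he : ⁅e, x⁆ = 0)
    (hh : ⁅h, x⁆ + ((n : k) + 1) • x = 0) : x = 0 := by
  by_contra hx
  have P : t.HasPrimitiveVectorWith x (-((n : k) + 1)) :=
    ⟨hx, by rw [neg_smul, eq_neg_of_add_eq_zero_left hh], he⟩
  obtain ⟨m, hm⟩ := P.exists_nat
  have : ((m + n + 1 : ℕ) : k) = 0 := by push_cast; linear_combination -hm
  exact Nat.succ_ne_zero _ (Nat.cast_eq_zero.mp this)

theorem lie_h_add_smul_mem_range_pow (t : IsSl2Triple h e f) (m : ℕ) {x : M}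
    (he : ⁅e, x⁆ = 0) (hx : x ∈ LinearMap.range (toEnd k L M f ^ (m + 1))) :
    ⁅h, x⁆ + ((m : k) + 2) • x ∈ LinearMap.range (toEnd k L M f ^ (m + 2)) := by
  obtain ⟨y, rfl⟩ := hx
  set E := toEnd k L M e
  set H := toEnd k L M h
  set F := toEnd k L M f
  have hHF : H * F ^ (m + 1) = F ^ (m + 1) * H + ((m + 1 : ℕ) * (-2 : k)) • F ^ (m + 1) := by
    rw [← lie_pow_of_lie_eq_smul t.lie_toEnd_h_toEnd_f, Ring.lie_def]; abel
  have hEF : E * F ^ (m + 1) =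
      F ^ (m + 1) * E + ((m + 1 : k) • (F ^ m * H) - ((m + 1) * m : k) • F ^ m) := by
    rw [← lie_pow_succ_of_sl2 t.lie_toEnd_e_toEnd_f t.lie_toEnd_h_toEnd_f, Ring.lie_def]; abel
  have h0 := congrArg (fun T : End k M => F (T y)) hEF
  have h1 := congrArg (fun T : End k M => T y) hHF
  simp only [Module.End.mul_apply, LinearMap.add_apply, LinearMap.sub_apply,
    LinearMap.smul_apply, map_add, map_sub, map_smul] at h0 h1
  change E _ = 0 at he
  rw [he, map_zero, eq_comm, ← eq_neg_iff_add_eq_zero] at h0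
  refine ⟨(-((m : k) + 1)⁻¹) • E y, ?_⟩
  change _ = H _ + _
  rw [map_smul, pow_succ' F (m + 1), Module.End.mul_apply, h0, h1]
  simp only [pow_succ' F m, Module.End.mul_apply]
  match_scalars
  · field_simp
  · field_simp
    ring

theorem isNilpotent_toEnd_f [FiniteDimensional k M] (t : IsSl2Triple h e f) :
    IsNilpotent (toEnd k L M f) :=
  Module.End.isNilpotent_of_lie_eq_smul (by norm_num) t.lie_toEnd_h_toEnd_f

theorem disjoint_range_toEnd_f_ker_toEnd_e [FiniteDimensional k M] (t : IsSl2Triple h e f) :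
    Disjoint (LinearMap.range (toEnd k L M f)) (LinearMap.ker (toEnd k L M e)) := by
  obtain ⟨n, hn⟩ := t.isNilpotent_toEnd_f (k := k) (M := M)
  suffices ∀ d m, n ≤ m + d → ∀ x : M, ⁅e, x⁆ = 0 →
      x ∈ LinearMap.range (toEnd k L M f ^ (m + 1)) → x = 0 by
    refine Submodule.disjoint_def.mpr fun x hxf hxe ↦ this n 0 (by omega) x hxe ?_
    rwa [zero_add, pow_one]
  intro d
  induction d with
  | zero =>
    rintro m hm _ - ⟨y, rfl⟩
    rw [pow_eq_zero_of_le (by omega) hn, LinearMap.zero_apply]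
  | succ d ih =>
    intro m hm x he hx
    have hx' := ih (m + 1) (by omega) _ (t.lie_e_lie_h_add_smul he _)
      (t.lie_h_add_smul_mem_range_pow m he hx)
    refine t.eq_zero_of_lie_e_eq_zero_of_lie_h_add_smul_eq_zero (k := k) (m + 1) he ?_
    convert hx' using 3
    push_cast
    ring

theorem isCompl_range_toEnd_f_ker_toEnd_e [FiniteDimensional k M] (t : IsSl2Triple h e f) :
    IsCompl (LinearMap.range (toEnd k L M f)) (LinearMap.ker (toEnd k L M e)) :=
  LinearMap.isCompl_range_ker_of_disjoint t.disjoint_range_toEnd_f_ker_toEnd_e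
    (t.symm.disjoint_range_toEnd_f_ker_toEnd_e (k := k))

end IsSl2Triple

/-- Let `g` be a finite-dimensional Lie algebra over a field of characteristic 0 with
nondegenerate Killing form `κ`, and `(e, h, f)` an `sl₂`-triple in `g`. Then
`g = [f, g] ⊕ z_g(e)`, and the alternating form `ω(ξ, η) = κ(e, ⁅ξ, η⁆)` restricted to
`V = [f, g]` (the range of `ad f`) is nondegenerate, i.e. `(V, ω)` is symplectic. -/
theorem stmt_15 (k : Type*) (g : Type*) [Field k] [CharZero k]
    [LieRing g] [LieAlgebra k g] [FiniteDimensional k g]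
    (hkill : (killingForm k g).Nondegenerate)
    (e h f : g) (hne : e ≠ 0)
    (hhe : ⁅h, e⁆ = (2 : k) • e) (hhf : ⁅h, f⁆ = -((2 : k) • f)) (hef : ⁅e, f⁆ = h) :
    IsCompl (LinearMap.range (LieAlgebra.ad k g f)) (LinearMap.ker (LieAlgebra.ad k g e)) ∧
    (∀ x ∈ LinearMap.range (LieAlgebra.ad k g f),
      (∀ y ∈ LinearMap.range (LieAlgebra.ad k g f), killingForm k g e ⁅x, y⁆ = 0) →
      x = 0) := by
  have hh : h ≠ 0 := by
    rintro rfl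
    rw [zero_lie, eq_comm, smul_eq_zero] at hhe
    exact hne (hhe.resolve_left two_ne_zero)
  have t : IsSl2Triple h e f :=
    ⟨hh, hef, by rw [hhe, two_smul, two_nsmul], by rw [hhf, two_smul, two_nsmul]⟩
  have hcompl : IsCompl (LinearMap.range (LieAlgebra.ad k g f))
      (LinearMap.ker (LieAlgebra.ad k g e)) :=
    t.isCompl_range_toEnd_f_ker_toEnd_e
  refine ⟨hcompl, fun x hx hω ↦ ?_⟩
  have hex : ⁅e, x⁆ = 0 := by
    refine hkill.1 _ fun y ↦ ?_
    have hy : y ∈ LinearMap.range (LieAlgebra.ad k g f) ⊔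
        LinearMap.ker (LieAlgebra.ad k g e) := by
      simp [hcompl.sup_eq_top]
    obtain ⟨y₁, hy₁, y₂, hy₂, rfl⟩ := Submodule.mem_sup.mp hy
    rw [map_add, LieModule.traceForm_apply_lie_apply, hω y₁ hy₁,
      LieModule.traceForm_apply_lie_apply', show ⁅e, y₂⁆ = 0 from hy₂, map_zero, neg_zero,
      add_zero]
  exact Submodule.disjoint_def.mp hcompl.disjoint x hx hex
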